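/- arXiv:2508.00498 — 7 statements merged into one kernel-verified Lean document; each statement's English description precedes it below -/
import Mathlib

section
/- Let E be a real normed vector space, let u : ℝ → E and s : ℝ → ℝ be functions of the Brans–Dicke coupling ω, let w ∈ E, and let φ∞ > 0. Assume Filter.Tendsto (fun ω => Real.sqrt ω • u ω) atTop (𝓝 w) and Filter.Tendsto s atTop (𝓝 φ∞). Then the Einstein-frame gradient v(ω) := (Real.sqrt((2ω+3)/(16π)) / s(ω)) • u(ω) satisfies Filter.Tendsto v atTop (𝓝 ((1/(Real.sqrt(8π) * φ∞)) • w)). -/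
open Filter Topology Real

/-- Limit of the Einstein-frame gradient `∇̃ₐφ̃ = √((2ω+3)/(16π)) ∇ₐφ / φ` as `ω → ∞`,
when `√ω • ∇ₐφ → ∇ₐΦ` and `φ(ω) → φ∞`: it tends to `(1/(√(8π) φ∞)) ∇ₐΦ`. -/
theorem einstein_frame_gradient_limit
    {E : Type*} [NormedAddCommGroup E] [NormedSpace ℝ E]
    (u : ℝ → E) (s : ℝ → ℝ) (w : E) (φinf : ℝ) (hφinf : 0 < φinf)
    (hu : Filter.Tendsto (fun ω => Real.sqrt ω • u ω) Filter.atTop (𝓝 w))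
    (hs : Filter.Tendsto s Filter.atTop (𝓝 φinf)) :
    Filter.Tendsto
      (fun ω => (Real.sqrt ((2 * ω + 3) / (16 * Real.pi)) / s ω) • u ω)
      Filter.atTop (𝓝 ((1 / (Real.sqrt (8 * Real.pi) * φinf)) • w)) := by
  have hπ : (0:ℝ) < Real.pi := Real.pi_pos
  -- inner argument tends to 1/(8π)
  have harg : Tendsto (fun ω : ℝ => (2 * ω + 3) / (16 * Real.pi * ω)) atTop
      (𝓝 (1 / (8 * Real.pi))) := by
    have h1 : ∀ᶠ ω : ℝ in atTop,
        1 / (8 * Real.pi) + 3 / (16 * Real.pi) * ω⁻¹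
          = (2 * ω + 3) / (16 * Real.pi * ω) := by
      filter_upwards [eventually_gt_atTop (0:ℝ)] with ω hω
      field_simp
      ring
    have h2 : Tendsto (fun ω : ℝ => 1 / (8 * Real.pi) + 3 / (16 * Real.pi) * ω⁻¹)
        atTop (𝓝 (1 / (8 * Real.pi) + 3 / (16 * Real.pi) * 0)) :=
      tendsto_const_nhds.add (tendsto_const_nhds.mul tendsto_inv_atTop_zero)
    rw [mul_zero, add_zero] at h2
    exact h2.congr' h1
  have hc : Tendsto (fun ω : ℝ => Real.sqrt ((2 * ω + 3) / (16 * Real.pi * ω))) atTop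
      (𝓝 (Real.sqrt (1 / (8 * Real.pi)))) :=
    (Real.continuous_sqrt.continuousAt).tendsto.comp harg
  -- scalar quotient tends to √(1/(8π)) / φ∞
  have hscal : Tendsto (fun ω : ℝ =>
      Real.sqrt ((2 * ω + 3) / (16 * Real.pi * ω)) / s ω) atTop
      (𝓝 (Real.sqrt (1 / (8 * Real.pi)) / φinf)) :=
    hc.div hs hφinf.ne'
  have hmain : Tendsto (fun ω : ℝ =>
      (Real.sqrt ((2 * ω + 3) / (16 * Real.pi * ω)) / s ω) • (Real.sqrt ω • u ω)) atTop
      (𝓝 ((Real.sqrt (1 / (8 * Real.pi)) / φinf) • w)) :=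
    hscal.smul hu
  have hval : Real.sqrt (1 / (8 * Real.pi)) / φinf = 1 / (Real.sqrt (8 * Real.pi) * φinf) := by
    rw [one_div (8*Real.pi), Real.sqrt_inv]
    field_simp
  rw [hval] at hmain
  refine hmain.congr' ?_
  filter_upwards [eventually_gt_atTop (0:ℝ)] with ω hω
  rw [smul_smul]
  congr 1
  rw [div_mul_eq_mul_div]
  congr 1
  rw [← Real.sqrt_mul (by positivity)]
  congr 1
  field_simp
end

section
/- Let E be a real normed vector space, w ∈ E, φ∞ > 0, α > 0, and let u : ℝ → E and s : ℝ → ℝ satisfy: (fun ω => u ω - (ω:ℝ)^(-(1/2):ℝ) • w) =O[atTop] (fun ω => (ω:ℝ)^(-(1/2 + α):ℝ)) and (fun ω => s ω - φ∞) =O[atTop] (fun ω => (ω:ℝ)^(-(1/2):ℝ)). Then the Einstein-frame gradient v(ω) := (Real.sqrt((2ω+3)/(16π)) / s(ω)) • u(ω) satisfies (fun ω => v ω - (1/(Real.sqrt(8π) * φ∞)) • w) =O[atTop] (fun ω => (ω:ℝ)^(-(min α (1/2)):ℝ)). -/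
open Filter Topology Real Asymptotics

/-- Subadditivity of the square root. -/
lemma sqrt_sub_sqrt_le {a b : ℝ} (hb : 0 ≤ b) (hab : b ≤ a) :
    Real.sqrt a - Real.sqrt b ≤ Real.sqrt (a - b) := by
  have h1 : Real.sqrt a ≤ Real.sqrt b + Real.sqrt (a - b) := by
    have hnb : (0:ℝ) ≤ Real.sqrt b := Real.sqrt_nonneg _
    have hnd : (0:ℝ) ≤ Real.sqrt (a - b) := Real.sqrt_nonneg _
    have hb2 : Real.sqrt b * Real.sqrt b = b := Real.mul_self_sqrt hb
    have hd2 : Real.sqrt (a - b) * Real.sqrt (a - b) = a - b :=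
      Real.mul_self_sqrt (by linarith)
    have : a ≤ (Real.sqrt b + Real.sqrt (a - b)) ^ 2 := by nlinarith
    calc Real.sqrt a ≤ Real.sqrt ((Real.sqrt b + Real.sqrt (a - b)) ^ 2) :=
          Real.sqrt_le_sqrt this
      _ = Real.sqrt b + Real.sqrt (a - b) := Real.sqrt_sq (by positivity)
  linarith

/-- Comparison of negative powers at infinity. -/
lemma rpow_neg_isBigO_rpow_neg {p q : ℝ} (h : p ≤ q) :
    (fun ω : ℝ => ω ^ (-q)) =O[Filter.atTop] (fun ω : ℝ => ω ^ (-p)) := by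
  apply Asymptotics.IsBigO.of_bound 1
  filter_upwards [eventually_ge_atTop (1:ℝ)] with ω hω
  have h0 : (0:ℝ) < ω := lt_of_lt_of_le one_pos hω
  rw [one_mul, Real.norm_eq_abs, Real.norm_eq_abs, abs_of_pos (Real.rpow_pos_of_pos h0 _),
    abs_of_pos (Real.rpow_pos_of_pos h0 _)]
  exact Real.rpow_le_rpow_of_exponent_le hω (by linarith)

/-- Quantitative asymptotics of the Einstein-frame gradient
`∇̃ₐφ̃ = √((2ω+3)/(16π)) ∇ₐφ / φ` under the expansions
`∇ₐφ = ω^{-1/2} ∇ₐΦ + O(ω^{-(1/2+α)})` and `φ = φ∞ + O(ω^{-1/2})`. -/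
theorem einstein_frame_gradient_bigO
    {E : Type*} [NormedAddCommGroup E] [NormedSpace ℝ E]
    (w : E) (φinf α : ℝ) (hφinf : 0 < φinf) (hα : 0 < α)
    (u : ℝ → E) (s : ℝ → ℝ)
    (hu : (fun ω => u ω - (ω : ℝ) ^ (-(1/2) : ℝ) • w) =O[Filter.atTop]
        (fun ω => (ω : ℝ) ^ (-(1/2 + α) : ℝ)))
    (hs : (fun ω => s ω - φinf) =O[Filter.atTop] (fun ω => (ω : ℝ) ^ (-(1/2) : ℝ))) :
    (fun ω => (Real.sqrt ((2 * ω + 3) / (16 * Real.pi)) / s ω) • u ω -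
        (1 / (Real.sqrt (8 * Real.pi) * φinf)) • w) =O[Filter.atTop]
      (fun ω => (ω : ℝ) ^ (-(min α (1/2)) : ℝ)) := by
  have hπ : (0:ℝ) < Real.pi := Real.pi_pos
  set c : ℝ → ℝ := fun ω => Real.sqrt ((2 * ω + 3) / (16 * Real.pi)) / s ω with hc
  set cinf : ℝ := 1 / (Real.sqrt (8 * Real.pi) * φinf) with hcinf
  -- s is eventually bounded below by φinf / 2
  have hstend : Tendsto s atTop (𝓝 φinf) := by
    have h0 : Tendsto (fun ω : ℝ => ω ^ (-(1/2) : ℝ)) atTop (𝓝 0) :=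
      tendsto_rpow_neg_atTop (by norm_num)
    have h1 : Tendsto (fun ω => s ω - φinf) atTop (𝓝 0) := hs.trans_tendsto h0
    have h2 := h1.add_const φinf
    simpa using h2
  have hsev : ∀ᶠ ω in atTop, φinf / 2 ≤ s ω :=
    hstend.eventually (eventually_ge_nhds (by linarith))
  obtain ⟨Cs, hCs, hsbound⟩ := hs.exists_pos
  have hsbound' := hsbound.bound
  -- bound on c : c =O ω^(1/2)
  have hcO : c =O[atTop] (fun ω : ℝ => ω ^ ((1:ℝ)/2)) := by
    apply Asymptotics.IsBigO.of_bound (Real.sqrt (3 / (16 * Real.pi)) * (2 / φinf))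
    filter_upwards [eventually_ge_atTop (3:ℝ), hsev] with ω hω3 hsω
    have hω0 : (0:ℝ) < ω := by linarith
    have hs0 : (0:ℝ) < s ω := by linarith
    have hsqrtω : Real.sqrt ω = ω ^ ((1:ℝ)/2) := Real.sqrt_eq_rpow ω
    have hnum : Real.sqrt ((2 * ω + 3) / (16 * Real.pi)) ≤
        Real.sqrt (3 / (16 * Real.pi)) * Real.sqrt ω := by
      rw [← Real.sqrt_mul (by positivity)]
      apply Real.sqrt_le_sqrt
      rw [div_mul_eq_mul_div, div_le_div_iff₀ (by positivity) (by positivity)]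
      nlinarith
    have hcω : |c ω| ≤ Real.sqrt (3 / (16 * Real.pi)) * Real.sqrt ω * (2 / φinf) := by
      rw [hc, abs_div, abs_of_nonneg (Real.sqrt_nonneg _), abs_of_pos hs0,
        div_le_iff₀ hs0]
      calc Real.sqrt ((2 * ω + 3) / (16 * Real.pi))
          ≤ Real.sqrt (3 / (16 * Real.pi)) * Real.sqrt ω := hnum
        _ = Real.sqrt (3 / (16 * Real.pi)) * Real.sqrt ω * (2 / φinf) * (φinf / 2) := by
            field_simp
        _ ≤ Real.sqrt (3 / (16 * Real.pi)) * Real.sqrt ω * (2 / φinf) * s ω := by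
            apply mul_le_mul_of_nonneg_left hsω; positivity
    rw [Real.norm_eq_abs, Real.norm_eq_abs, abs_of_pos (Real.rpow_pos_of_pos hω0 _)]
    rw [← hsqrtω]
    calc |c ω| ≤ Real.sqrt (3 / (16 * Real.pi)) * Real.sqrt ω * (2 / φinf) := hcω
      _ = Real.sqrt (3 / (16 * Real.pi)) * (2 / φinf) * Real.sqrt ω := by ring
  -- Term A : c ω • (u ω - ω^(-1/2) • w) =O ω^(-α)
  have hA : (fun ω => c ω • (u ω - (ω:ℝ) ^ (-(1/2):ℝ) • w)) =O[atTop]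
      (fun ω : ℝ => ω ^ (-α)) := by
    have h1 := hcO.smul hu
    refine h1.trans (Filter.EventuallyEq.isBigO ?_)
    filter_upwards [eventually_gt_atTop (0:ℝ)] with ω hω0
    rw [smul_eq_mul, ← Real.rpow_add hω0]
    norm_num
  -- Term B : (c ω * ω^(-1/2) - cinf) =O ω^(-1/2)
  have hB : (fun ω => c ω * (ω:ℝ) ^ (-(1/2):ℝ) - cinf) =O[atTop]
      (fun ω : ℝ => ω ^ (-(1/2):ℝ)) := by
    apply Asymptotics.IsBigO.of_bound
      (Real.sqrt (3 / (16 * Real.pi)) * (2 / φinf) +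
        Real.sqrt (1 / (8 * Real.pi)) * (Cs * (2 / (φinf * φinf))))
    filter_upwards [eventually_ge_atTop (3:ℝ), hsev, hsbound'] with ω hω3 hsω hsb
    have hω0 : (0:ℝ) < ω := by linarith
    have hs0 : (0:ℝ) < s ω := by linarith
    have hrω : (ω:ℝ) ^ (-(1/2):ℝ) = (Real.sqrt ω)⁻¹ := by
      rw [Real.sqrt_eq_rpow, ← Real.rpow_neg hω0.le]
    have hsqω : (0:ℝ) < Real.sqrt ω := Real.sqrt_pos.mpr hω0
    set q : ℝ := (2 * ω + 3) / (16 * Real.pi * ω) with hq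
    set b : ℝ := 1 / (8 * Real.pi) with hb
    have hb0 : (0:ℝ) < b := by positivity
    have hq0 : (0:ℝ) < q := by positivity
    have hbq : b ≤ q := by
      rw [hb, hq, div_le_div_iff₀ (by positivity) (by positivity)]
      nlinarith
    have hqb : q - b = 3 / (16 * Real.pi * ω) := by
      rw [hq, hb]; field_simp; ring
    -- rewrite c ω * ω^(-1/2) as √q / s ω
    have hnumq : Real.sqrt ((2 * ω + 3) / (16 * Real.pi)) * (Real.sqrt ω)⁻¹ =
        Real.sqrt q := by
      rw [← Real.sqrt_inv, ← Real.sqrt_mul (by positivity), hq]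
      congr 1
      field_simp
    have hcq : c ω * (ω:ℝ) ^ (-(1/2):ℝ) = Real.sqrt q / s ω := by
      simp only [hc]
      rw [hrω, div_mul_eq_mul_div, hnumq]
    have hcinfq : cinf = Real.sqrt b / φinf := by
      rw [hcinf, hb, Real.sqrt_div' 1 (by positivity), Real.sqrt_one]
      field_simp
    -- the two error terms
    have herr1 : |Real.sqrt q - Real.sqrt b| ≤
        Real.sqrt (3 / (16 * Real.pi)) * (Real.sqrt ω)⁻¹ := by
      rw [abs_of_nonneg (by linarith [Real.sqrt_le_sqrt hbq] : (0:ℝ) ≤ Real.sqrt q - Real.sqrt b)]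
      calc Real.sqrt q - Real.sqrt b ≤ Real.sqrt (q - b) := sqrt_sub_sqrt_le hb0.le hbq
        _ = Real.sqrt (3 / (16 * Real.pi)) * (Real.sqrt ω)⁻¹ := by
            rw [hqb, ← Real.sqrt_inv, ← Real.sqrt_mul (by positivity)]
            congr 1
            field_simp
    have herr2 : |1 / s ω - 1 / φinf| ≤
        Cs * (2 / (φinf * φinf)) * (Real.sqrt ω)⁻¹ := by
      have h1 : 1 / s ω - 1 / φinf = (φinf - s ω) / (s ω * φinf) := by
        field_simp
      rw [h1, abs_div, abs_of_pos (mul_pos hs0 hφinf)]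
      have h2 : |φinf - s ω| ≤ Cs * (Real.sqrt ω)⁻¹ := by
        have := hsb
        rw [Real.norm_eq_abs, Real.norm_eq_abs, hrω] at this
        rw [abs_sub_comm]
        calc |s ω - φinf| ≤ Cs * |(Real.sqrt ω)⁻¹| := this
          _ = Cs * (Real.sqrt ω)⁻¹ := by rw [abs_of_pos (by positivity)]
      have h3 : φinf * φinf / 2 ≤ s ω * φinf := by nlinarith
      calc |φinf - s ω| / (s ω * φinf) ≤ (Cs * (Real.sqrt ω)⁻¹) / (φinf * φinf / 2) := by
            apply div_le_div₀ (by positivity) h2 (by positivity) h3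
        _ = Cs * (2 / (φinf * φinf)) * (Real.sqrt ω)⁻¹ := by field_simp
    -- combine
    have hdecomp : c ω * (ω:ℝ) ^ (-(1/2):ℝ) - cinf =
        (Real.sqrt q - Real.sqrt b) / s ω + Real.sqrt b * (1 / s ω - 1 / φinf) := by
      rw [hcq, hcinfq]
      field_simp
      ring
    rw [Real.norm_eq_abs, Real.norm_eq_abs, hdecomp, hrω,
      abs_of_pos (by positivity : (0:ℝ) < (Real.sqrt ω)⁻¹)]
    have hpart1 : |(Real.sqrt q - Real.sqrt b) / s ω| ≤
        Real.sqrt (3 / (16 * Real.pi)) * (2 / φinf) * (Real.sqrt ω)⁻¹ := by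
      rw [abs_div, abs_of_pos hs0, div_le_iff₀ hs0]
      calc |Real.sqrt q - Real.sqrt b|
          ≤ Real.sqrt (3 / (16 * Real.pi)) * (Real.sqrt ω)⁻¹ := herr1
        _ = Real.sqrt (3 / (16 * Real.pi)) * (2 / φinf) * (Real.sqrt ω)⁻¹ * (φinf / 2) := by
            field_simp
        _ ≤ Real.sqrt (3 / (16 * Real.pi)) * (2 / φinf) * (Real.sqrt ω)⁻¹ * s ω := by
            apply mul_le_mul_of_nonneg_left hsω; positivity
    have hpart2 : |Real.sqrt b * (1 / s ω - 1 / φinf)| ≤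
        Real.sqrt (1 / (8 * Real.pi)) * (Cs * (2 / (φinf * φinf))) * (Real.sqrt ω)⁻¹ := by
      rw [abs_mul, abs_of_nonneg (Real.sqrt_nonneg _), hb]
      calc Real.sqrt (1 / (8 * Real.pi)) * |1 / s ω - 1 / φinf|
          ≤ Real.sqrt (1 / (8 * Real.pi)) * (Cs * (2 / (φinf * φinf)) * (Real.sqrt ω)⁻¹) :=
            mul_le_mul_of_nonneg_left herr2 (Real.sqrt_nonneg _)
        _ = Real.sqrt (1 / (8 * Real.pi)) * (Cs * (2 / (φinf * φinf))) * (Real.sqrt ω)⁻¹ := by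
            ring
    calc |(Real.sqrt q - Real.sqrt b) / s ω + Real.sqrt b * (1 / s ω - 1 / φinf)|
        ≤ |(Real.sqrt q - Real.sqrt b) / s ω| + |Real.sqrt b * (1 / s ω - 1 / φinf)| :=
          abs_add_le _ _
      _ ≤ Real.sqrt (3 / (16 * Real.pi)) * (2 / φinf) * (Real.sqrt ω)⁻¹ +
            Real.sqrt (1 / (8 * Real.pi)) * (Cs * (2 / (φinf * φinf))) * (Real.sqrt ω)⁻¹ :=
          add_le_add hpart1 hpart2
      _ = (Real.sqrt (3 / (16 * Real.pi)) * (2 / φinf) +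
            Real.sqrt (1 / (8 * Real.pi)) * (Cs * (2 / (φinf * φinf)))) * (Real.sqrt ω)⁻¹ := by
          ring
  -- Term B smul w
  have hBw : (fun ω => (c ω * (ω:ℝ) ^ (-(1/2):ℝ) - cinf) • w) =O[atTop]
      (fun ω : ℝ => ω ^ (-(1/2):ℝ)) := by
    calc (fun ω => (c ω * (ω:ℝ) ^ (-(1/2):ℝ) - cinf) • w)
        =O[atTop] (fun ω : ℝ => (ω ^ (-(1/2):ℝ)) • w) := hB.smul (isBigO_refl (fun _ : ℝ => w) _)
      _ =O[atTop] (fun ω : ℝ => ω ^ (-(1/2):ℝ)) := by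
          apply Asymptotics.IsBigO.of_bound ‖w‖
          filter_upwards with ω
          rw [norm_smul, mul_comm]
  -- assemble
  have hmin1 : (fun ω : ℝ => ω ^ (-α)) =O[atTop]
      (fun ω : ℝ => ω ^ (-(min α (1/2)) : ℝ)) := rpow_neg_isBigO_rpow_neg (min_le_left _ _)
  have hmin2 : (fun ω : ℝ => ω ^ (-(1/2):ℝ)) =O[atTop]
      (fun ω : ℝ => ω ^ (-(min α (1/2)) : ℝ)) := rpow_neg_isBigO_rpow_neg (min_le_right _ _)
  have hsum := (hA.trans hmin1).add (hBw.trans hmin2)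
  refine hsum.congr_left ?_
  intro ω
  rw [smul_sub, sub_smul, mul_smul]
  abel
end

section
/- (Pointwise version of Theorem 1.) Let E be a real normed vector space, u : ℝ → E, s : ℝ → ℝ, w ∈ E, φ∞ > 0, and B : ℝ → (E →L[ℝ] E →L[ℝ] ℝ) with limit B∞. Assume Filter.Tendsto (fun ω => Real.sqrt ω • u ω) atTop (𝓝 w), Filter.Tendsto s atTop (𝓝 φ∞), Filter.Tendsto B atTop (𝓝 B∞), and that w is timelike for B∞, i.e. -(B∞ w w) > 0. Define v(ω) := (Real.sqrt((2ω+3)/(16π)) / s(ω)) • u(ω) and the Einstein-frame chemical potential μ̃(ω) := Real.sqrt(-(1/s(ω)) * B(ω)(v(ω))(v(ω))). Then Filter.Tendsto μ̃ atTop (𝓝 (Real.sqrt(-(B∞ w w)/(8π * φ∞^3)))), and this limit is strictly positive; in particular the limit of μ̃ as ω → ∞ is nonzero. -/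
open Filter Topology Real

/-- Pointwise version of Theorem 1: the Einstein-frame chemical potential
`μ̃ = √(2X̃)`, with `2X̃ = -g̃^{ab}∇̃ₐφ̃∇̃_bφ̃`, `g̃^{ab} = φ⁻¹ g^{ab}` and
`∇̃ₐφ̃ = √((2ω+3)/(16π)) ∇ₐφ/φ`, tends to the strictly positive value
`√(-(B∞ w w)/(8π φ∞³))` as `ω → ∞`; in particular its limit is nonzero. -/
theorem einstein_frame_chemical_potential_limit
    {E : Type*} [NormedAddCommGroup E] [NormedSpace ℝ E]
    (u : ℝ → E) (s : ℝ → ℝ) (w : E) (φinf : ℝ) (hφinf : 0 < φinf)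
    (B : ℝ → (E →L[ℝ] E →L[ℝ] ℝ)) (Binf : E →L[ℝ] E →L[ℝ] ℝ)
    (hu : Filter.Tendsto (fun ω => Real.sqrt ω • u ω) Filter.atTop (𝓝 w))
    (hs : Filter.Tendsto s Filter.atTop (𝓝 φinf))
    (hB : Filter.Tendsto B Filter.atTop (𝓝 Binf))
    (htimelike : 0 < -(Binf w w))
    (v : ℝ → E)
    (hv : ∀ ω, v ω = (Real.sqrt ((2 * ω + 3) / (16 * Real.pi)) / s ω) • u ω)
    (μt : ℝ → ℝ)
    (hμt : ∀ ω, μt ω = Real.sqrt (-(1 / s ω) * B ω (v ω) (v ω))) :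
    Filter.Tendsto μt Filter.atTop
        (𝓝 (Real.sqrt (-(Binf w w) / (8 * Real.pi * φinf ^ 3)))) ∧
      0 < Real.sqrt (-(Binf w w) / (8 * Real.pi * φinf ^ 3)) := by
  have hπ : (0:ℝ) < Real.pi := Real.pi_pos
  set L : ℝ := -(Binf w w) / (8 * Real.pi * φinf ^ 3) with hL
  have hLpos : 0 < L := by
    apply div_pos htimelike; positivity
  have hap : Tendsto (fun ω => B ω (Real.sqrt ω • u ω)) atTop (𝓝 (Binf w)) :=
    (isBoundedBilinearMap_apply.continuous.tendsto (Binf, w)).comp (hB.prodMk_nhds hu)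
  have hF : Tendsto (fun ω => B ω (Real.sqrt ω • u ω) (Real.sqrt ω • u ω)) atTop
      (𝓝 (Binf w w)) :=
    (isBoundedBilinearMap_apply.continuous.tendsto (Binf w, w)).comp (hap.prodMk_nhds hu)
  have hinv : Tendsto (fun ω : ℝ => ω⁻¹) atTop (𝓝 0) := tendsto_inv_atTop_zero
  have hA : Tendsto (fun ω : ℝ => (2 * ω + 3) / (16 * Real.pi * ω)) atTop
      (𝓝 (1 / (8 * Real.pi))) := by
    have h1 : Tendsto (fun ω : ℝ => (2 + 3 * ω⁻¹) / (16 * Real.pi)) atTop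
        (𝓝 ((2 + 3 * 0) / (16 * Real.pi))) :=
      (tendsto_const_nhds.add (hinv.const_mul 3)).div_const _
    have h2 : (2 + 3 * (0:ℝ)) / (16 * Real.pi) = 1 / (8 * Real.pi) := by ring
    rw [h2] at h1
    refine h1.congr' ?_
    filter_upwards [eventually_gt_atTop (0:ℝ)] with ω hω
    rw [div_eq_div_iff (by positivity) (by positivity)]
    field_simp
  have hsinv : Tendsto (fun ω => ((s ω)⁻¹) ^ 3) atTop (𝓝 (φinf⁻¹ ^ 3)) :=
    (hs.inv₀ hφinf.ne').pow 3
  have hg : Tendsto (fun ω => (2 * ω + 3) / (16 * Real.pi * ω) * ((s ω)⁻¹) ^ 3 *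
      (-(B ω (Real.sqrt ω • u ω) (Real.sqrt ω • u ω)))) atTop (𝓝 L) := by
    have h := (hA.mul hsinv).mul hF.neg
    convert h using 2
    rw [hL]
    field_simp
    try ring
  have hspos : ∀ᶠ ω in atTop, 0 < s ω := hs.eventually (eventually_gt_nhds hφinf)
  have heq : ∀ᶠ ω in atTop, (2 * ω + 3) / (16 * Real.pi * ω) * ((s ω)⁻¹) ^ 3 *
      (-(B ω (Real.sqrt ω • u ω) (Real.sqrt ω • u ω))) = -(1 / s ω) * B ω (v ω) (v ω) := by
    filter_upwards [eventually_gt_atTop (0:ℝ), hspos] with ω hω hsω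
    rw [hv ω]
    have hrr : Real.sqrt ω * Real.sqrt ω = ω := Real.mul_self_sqrt hω.le
    have haa : Real.sqrt ((2 * ω + 3) / (16 * Real.pi)) *
        Real.sqrt ((2 * ω + 3) / (16 * Real.pi)) = (2 * ω + 3) / (16 * Real.pi) :=
      Real.mul_self_sqrt (by positivity)
    simp only [map_smul, ContinuousLinearMap.smul_apply, smul_eq_mul]
    set a := Real.sqrt ((2 * ω + 3) / (16 * Real.pi)) with ha
    set X := B ω (u ω) (u ω) with hX
    rw [show Real.sqrt ω * (Real.sqrt ω * X) = ω * X by rw [← mul_assoc, hrr],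
      show a / s ω * (a / s ω * X) = (a * a) * X / (s ω * s ω) by ring, haa]
    field_simp
  have hgoal : Tendsto (fun ω => -(1 / s ω) * B ω (v ω) (v ω)) atTop (𝓝 L) :=
    hg.congr' heq
  refine ⟨?_, Real.sqrt_pos.mpr hLpos⟩
  have : Tendsto (fun ω => Real.sqrt (-(1 / s ω) * B ω (v ω) (v ω))) atTop (𝓝 (Real.sqrt L)) :=
    hgoal.sqrt
  exact this.congr fun ω => (hμt ω).symm
end

section
/- Let E be a real normed vector space, u : ℝ → (E →L[ℝ] ℝ), s : ℝ → ℝ, w ∈ (E →L[ℝ] ℝ), φ∞ ≠ 0, let g : ℝ → (E →L[ℝ] E →L[ℝ] ℝ) with limit g∞ along atBot, and let B : ℝ → ((E →L[ℝ] ℝ) →L[ℝ] (E →L[ℝ] ℝ) →L[ℝ] ℝ) with limit B∞ along atBot. Assume Filter.Tendsto (fun ω => Real.sqrt |ω| • u ω) atBot (𝓝 w), Filter.Tendsto s atBot (𝓝 φ∞), Filter.Tendsto g atBot (𝓝 g∞), and Filter.Tendsto B atBot (𝓝 B∞). Then for all vectors X, Y ∈ E, Filter.Tendsto (fun ω =>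 (ω / (s ω)^2) * (u ω X * u ω Y - (1/2) * g ω X Y * B ω (u ω) (u ω))) atBot (𝓝 (-(1/φ∞^2) * (w X * w Y - (1/2) * g∞ X Y * B∞ w w))); i.e. for ω → -∞ the limit of A_{ab} acquires the factor sign(ω) = -1. -/
/-!
The stress `T(u) = u ⊗ u - ½ g B(u, u)` is quadratic in `u`, so for `ω ≤ 0` we have
`ω • T(u) = -T(√|ω| • u)`. The right-hand side converges by continuity of evaluation, and the
minus sign is the `sign ω` of the anomalous limit.
-/

open Filter Topology Real

section

variable {α 𝕜 E F : Type*} [NontriviallyNormedField 𝕜] [NormedAddCommGroup E] [NormedSpace 𝕜 E]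
  [NormedAddCommGroup F] [NormedSpace 𝕜 F] {l : Filter α}

theorem Filter.Tendsto.clm_apply {f : α → E →L[𝕜] F} {x : α → E} {f₀ : E →L[𝕜] F} {x₀ : E}
    (hf : Tendsto f l (𝓝 f₀)) (hx : Tendsto x l (𝓝 x₀)) :
    Tendsto (fun a => f a (x a)) l (𝓝 (f₀ x₀)) :=
  (isBoundedBilinearMap_apply.continuous.tendsto (f₀, x₀)).comp (hf.prodMk_nhds hx)

end

section

variable {E : Type*} [NormedAddCommGroup E] [NormedSpace ℝ E]

/-- `∇ₐφ∇_bφ - ½ g_{ab} ∇_cφ∇ᶜφ` at `(X, Y)`, with `u = ∇φ` and `B` the inverse metric. -/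
noncomputable def scalarStress (u : E →L[ℝ] ℝ) (g : E →L[ℝ] E →L[ℝ] ℝ)
    (B : (E →L[ℝ] ℝ) →L[ℝ] (E →L[ℝ] ℝ) →L[ℝ] ℝ) (X Y : E) : ℝ :=
  u X * u Y - (1 / 2) * g X Y * B u u

variable {u : E →L[ℝ] ℝ} {g : E →L[ℝ] E →L[ℝ] ℝ}
  {B : (E →L[ℝ] ℝ) →L[ℝ] (E →L[ℝ] ℝ) →L[ℝ] ℝ} {X Y : E}

theorem scalarStress_smul (t : ℝ) :
    scalarStress (t • u) g B X Y = t ^ 2 * scalarStress u g B X Y := by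
  simp only [scalarStress, map_smul, smul_apply, smul_eq_mul]
  ring

theorem scalarStress_sqrt_abs_smul_of_nonpos {ω : ℝ} (hω : ω ≤ 0) :
    scalarStress (√|ω| • u) g B X Y = -ω * scalarStress u g B X Y := by
  rw [scalarStress_smul, sq_sqrt (abs_nonneg ω), abs_of_nonpos hω]

end

/-- For `ω → -∞` the limit of the anomalous term
`A_{ab} = (ω/φ²)(∇ₐφ∇_bφ - ½ g_{ab} ∇_cφ∇ᶜφ)` acquires the factor `sign(ω) = -1`:
when `√|ω| • ∇ₐφ → ∇ₐΦ` and `φ(ω) → φ∞ ≠ 0`, evaluated on any pair of vectors `X, Y`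
it tends to `-(1/φ∞²)(∇ₐΦ∇_bΦ - ½ g^{(∞)}_{ab} ∇_cΦ∇ᶜΦ)(X,Y)`. -/
theorem anomalous_term_limit_atBot
    {E : Type*} [NormedAddCommGroup E] [NormedSpace ℝ E]
    (u : ℝ → (E →L[ℝ] ℝ)) (s : ℝ → ℝ) (w : E →L[ℝ] ℝ) (φinf : ℝ) (hφinf : φinf ≠ 0)
    (g : ℝ → (E →L[ℝ] E →L[ℝ] ℝ)) (ginf : E →L[ℝ] E →L[ℝ] ℝ)
    (B : ℝ → ((E →L[ℝ] ℝ) →L[ℝ] (E →L[ℝ] ℝ) →L[ℝ] ℝ))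
    (Binf : (E →L[ℝ] ℝ) →L[ℝ] (E →L[ℝ] ℝ) →L[ℝ] ℝ)
    (hu : Filter.Tendsto (fun ω => Real.sqrt |ω| • u ω) Filter.atBot (𝓝 w))
    (hs : Filter.Tendsto s Filter.atBot (𝓝 φinf))
    (hg : Filter.Tendsto g Filter.atBot (𝓝 ginf))
    (hB : Filter.Tendsto B Filter.atBot
      (@nhds _ (@ContinuousLinearMap.topologicalSpace ℝ ℝ _ _ (RingHom.id ℝ) (E →L[ℝ] ℝ)
        ((E →L[ℝ] ℝ) →L[ℝ] ℝ) _ _ _ _ _ _ _) Binf)) :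
    ∀ X Y : E,
      Filter.Tendsto
        (fun ω => (ω / (s ω) ^ 2) *
          (u ω X * u ω Y - (1/2) * g ω X Y * B ω (u ω) (u ω)))
        Filter.atBot
        (𝓝 (-(1 / φinf ^ 2) * (w X * w Y - (1/2) * ginf X Y * Binf w w))) := by
  intro X Y
  have hcoeff : Tendsto (fun ω => -(1 / s ω ^ 2)) atBot (𝓝 (-(1 / φinf ^ 2))) :=
    (tendsto_const_nhds.div (hs.pow 2) (pow_ne_zero 2 hφinf)).neg
  have hstress : Tendsto (fun ω => scalarStress (√|ω| • u ω) (g ω) (B ω) X Y) atBot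
      (𝓝 (scalarStress w ginf Binf X Y)) :=
    ((hu.clm_apply tendsto_const_nhds).mul (hu.clm_apply tendsto_const_nhds)).sub
      ((tendsto_const_nhds.mul ((hg.clm_apply tendsto_const_nhds).clm_apply tendsto_const_nhds)).mul
        ((hB.clm_apply hu).clm_apply hu))
  refine (hcoeff.mul hstress).congr' ?_
  filter_upwards [eventually_le_atBot 0] with ω hω
  rw [scalarStress_sqrt_abs_smul_of_nonpos hω, scalarStress]
  ring
end

section
/- Let E be a real normed vector space, u : ℝ → E, s : ℝ → ℝ, R : ℝ → ℝ, w ∈ E, φ∞ > 0, R∞ ∈ ℝ, let B : ℝ → (E →L[ℝ] E →L[ℝ] ℝ) with limit B∞, and let V : ℝ → ℝ be continuous at φ∞. Assume Filter.Tendsto (fun ω => Real.sqrt ω • u ω) atTop (𝓝 w), Filter.Tendsto s atTop (𝓝 φ∞), Filter.Tendsto R atTop (𝓝 R∞), and Filter.Tendsto B atTop (𝓝 B∞). Then the Brans–Dicke Lagrangian density ℒ(ω) := s(ω) * R(ω) - (ω / s(ω)) * B(ω)(u(ω))(u(ω)) - V(s(ω)) satisfies Filter.Tendsto ℒ atTop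 (𝓝 (φ∞ * R∞ - (1/φ∞) * B∞ w w - V φ∞)). -/
open Filter Topology Real

/-- Limit of the Jordan-frame Brans–Dicke Lagrangian density
`ℒ = φR - (ω/φ)∇_cφ∇ᶜφ - V(φ)` as `ω → ∞`, under the expansion `φ ∼ φ∞ + Φ/√ω`:
it tends to `φ∞ R∞ - (1/φ∞)∇_cΦ∇ᶜΦ - V(φ∞)`, i.e. Einstein gravity with a
cosmological constant `V(φ∞)` minimally coupled to the remnant scalar `Φ`. -/
theorem brans_dicke_lagrangian_limit
    {E : Type*} [NormedAddCommGroup E] [NormedSpace ℝ E]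
    (u : ℝ → E) (s : ℝ → ℝ) (R : ℝ → ℝ) (w : E) (φinf Rinf : ℝ) (hφinf : 0 < φinf)
    (B : ℝ → (E →L[ℝ] E →L[ℝ] ℝ)) (Binf : E →L[ℝ] E →L[ℝ] ℝ)
    (V : ℝ → ℝ) (hV : ContinuousAt V φinf)
    (hu : Filter.Tendsto (fun ω => Real.sqrt ω • u ω) Filter.atTop (𝓝 w))
    (hs : Filter.Tendsto s Filter.atTop (𝓝 φinf))
    (hR : Filter.Tendsto R Filter.atTop (𝓝 Rinf))
    (hB : Filter.Tendsto B Filter.atTop (𝓝 Binf)) :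
    Filter.Tendsto
      (fun ω => s ω * R ω - (ω / s ω) * B ω (u ω) (u ω) - V (s ω))
      Filter.atTop
      (𝓝 (φinf * Rinf - (1 / φinf) * Binf w w - V φinf)) := by
  have h1 : Tendsto (fun ω => B ω (Real.sqrt ω • u ω)) atTop (𝓝 (Binf w)) :=
    (isBoundedBilinearMap_apply.continuous.tendsto (Binf, w)).comp (hB.prodMk_nhds hu)
  have hBuu : Tendsto (fun ω => B ω (Real.sqrt ω • u ω) (Real.sqrt ω • u ω))
      atTop (𝓝 (Binf w w)) :=
    (isBoundedBilinearMap_apply.continuous.tendsto (Binf w, w)).comp (h1.prodMk_nhds hu)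
  have hsne : ∀ᶠ ω in atTop, s ω ≠ 0 :=
    hs.eventually_ne (ne_of_gt hφinf)
  have hmain : Tendsto (fun ω => s ω * R ω - (s ω)⁻¹ *
      (B ω (Real.sqrt ω • u ω) (Real.sqrt ω • u ω)) - V (s ω)) atTop
      (𝓝 (φinf * Rinf - (1 / φinf) * Binf w w - V φinf)) := by
    have := ((hs.mul hR).sub (((hs.inv₀ (ne_of_gt hφinf)).mul hBuu))).sub
      (hV.tendsto.comp hs)
    simpa [one_div] using this
  refine hmain.congr' ?_
  filter_upwards [hsne, eventually_ge_atTop (0 : ℝ)] with ω hne hω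
  have : B ω (Real.sqrt ω • u ω) (Real.sqrt ω • u ω) = ω * B ω (u ω) (u ω) := by
    simp [map_smul, smul_eq_mul, ← mul_assoc, Real.mul_self_sqrt hω, Real.sq_sqrt hω]
  rw [this]
  field_simp
end

section
/- (Pointwise version of Corollary 1: simultaneous vanishing temperature and non-vanishing chemical potential.) Let E be a real normed vector space, u : ℝ → E, s : ℝ → ℝ, w ∈ E, φ∞ > 0, and B : ℝ → (E →L[ℝ] E →L[ℝ] ℝ) with limit B∞, satisfying Filter.Tendsto (fun ω => Real.sqrt ω • u ω) atTop (𝓝 w), Filter.Tendsto s atTop (𝓝 φ∞), Filter.Tendsto B atTop (𝓝 B∞), and -(B∞ w w) > 0. Define 𝒦𝒯(ω) := Real.sqrt(-(B(ω)(u(ω))(u(ω)))) / (8π * s(ω)), v(ω) := (Real.sqrt((2ω+3)/(16π)) / s(ω)) • u(ω), and μ̃(ω) := Real.sqrt(-(1/s(ω)) * B(ω)(v(ω))(v(ω))). Then Filter.Tendsto 𝒦𝒯 atTop (𝓝 0) while Filter.Tendsto μ̃ atTop (𝓝 (Real.sqrt(-(B∞ w w)/(8π * φ∞^3)))) with Real.sqrt(-(B∞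 w w)/(8π * φ∞^3)) > 0; hence the ω → ∞ limit is not the zero-temperature, zero-chemical-potential state characterizing the General Relativity limit. -/
/-!
Since `√ω • u ω → w`, the gradient `u ω` itself tends to `0`, and with it the Jordan-frame
temperature, which is of first order in `u`. The Einstein-frame gradient carries the extra factor
`√((2ω + 3)/(16π)) ~ √(ω/(8π))`, which exactly compensates this decay:
`μ̃² = -(2ω + 3)/(16πω) · B(√ω • u, √ω • u) / s³ → -B∞(w, w)/(8π φ∞³) > 0`.
-/

open Filter Topology Real

theorem Filter.Tendsto.clm_apply_s13 {α 𝕜 E F : Type*} [NontriviallyNormedField 𝕜]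
    [NormedAddCommGroup E] [NormedSpace 𝕜 E] [NormedAddCommGroup F] [NormedSpace 𝕜 F]
    {l : Filter α} {C : α → E →L[𝕜] F} {L : E →L[𝕜] F} {a : α → E} {x : E}
    (hC : Tendsto C l (𝓝 L)) (ha : Tendsto a l (𝓝 x)) :
    Tendsto (fun t => C t (a t)) l (𝓝 (L x)) :=
  (isBoundedBilinearMap_apply.continuous.tendsto (L, x)).comp (hC.prodMk_nhds ha)

theorem tendsto_zero_of_tendsto_smul_of_tendsto_atTop {α E : Type*} [NormedAddCommGroup E]
    [NormedSpace ℝ E] {l : Filter α} {f : α → ℝ} {u : α → E} {w : E}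
    (hf : Tendsto f l atTop) (hfu : Tendsto (fun t => f t • u t) l (𝓝 w)) :
    Tendsto u l (𝓝 0) := by
  have h := hf.inv_tendsto_atTop.smul hfu
  rw [zero_smul] at h
  refine h.congr' ?_
  filter_upwards [hf.eventually_ne_atTop 0] with t ht
  rw [Pi.inv_apply, smul_smul, inv_mul_cancel₀ ht, one_smul]

theorem ContinuousLinearMap.apply_smul_smul {𝕜 E : Type*} [NontriviallyNormedField 𝕜]
    [NormedAddCommGroup E] [NormedSpace 𝕜 E] (B : E →L[𝕜] E →L[𝕜] 𝕜) (a b : 𝕜) (x y : E) :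
    B (a • x) (b • y) = a * b * B x y := by
  simp only [map_smul, FunLike.coe_smul, Pi.smul_apply, smul_eq_mul, mul_assoc, mul_left_comm b]

-- `(2ω + 3)/(16π)` is the square of the factor in `∇̃ₐφ̃ = √((2ω + 3)/(16π)) ∇ₐφ/φ`.
theorem tendsto_coupling_div_atTop :
    Tendsto (fun ω : ℝ => (2 * ω + 3) / (16 * π) / ω) atTop (𝓝 (1 / (8 * π))) := by
  have h : Tendsto (fun ω : ℝ => (2 + 3 * ω⁻¹) / (16 * π)) atTop (𝓝 ((2 + 3 * 0) / (16 * π))) :=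
    (tendsto_const_nhds.add (tendsto_inv_atTop_zero.const_mul 3)).div_const _
  convert h.congr' ?_ using 2
  · field_simp
    norm_num
  · filter_upwards [eventually_gt_atTop 0] with ω hω
    field_simp

theorem tendsto_einstein_chemical_potential_sq {s q : ℝ → ℝ} {φ Q : ℝ} (hφ : φ ≠ 0)
    (hs : Tendsto s atTop (𝓝 φ)) (hq : Tendsto (fun ω => ω * q ω) atTop (𝓝 Q)) :
    Tendsto (fun ω => -(1 / s ω) *
        (√((2 * ω + 3) / (16 * π)) / s ω * (√((2 * ω + 3) / (16 * π)) / s ω) * q ω))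
      atTop (𝓝 (-Q / (8 * π * φ ^ 3))) := by
  have h := (hq.neg.mul tendsto_coupling_div_atTop).div (hs.pow 3) (pow_ne_zero 3 hφ)
  convert h.congr' ?_ using 2
  · field_simp
  · filter_upwards [eventually_gt_atTop 0, hs.eventually_ne hφ] with ω hω hsω
    rw [Pi.div_apply, div_mul_div_comm, mul_self_sqrt (by positivity)]
    field_simp

/-- Pointwise version of Corollary 1: as `ω → ∞` the Jordan-frame temperature
`𝒦𝒯 = √(-∇ₐφ∇ᵃφ)/(8πφ)` tends to `0`, while the Einstein-frame chemical potential
`μ̃ = √(-(1/φ) g^{ab} ∇̃ₐφ̃ ∇̃_bφ̃)` tends to the strictly positive value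
`√(-(B∞ w w)/(8π φ∞³))`; hence the `ω → ∞` limit is not the zero-temperature,
zero-chemical-potential state characterizing the General Relativity limit. -/
theorem temperature_vanishes_chemical_potential_does_not
    {E : Type*} [NormedAddCommGroup E] [NormedSpace ℝ E]
    (u : ℝ → E) (s : ℝ → ℝ) (w : E) (φinf : ℝ) (hφinf : 0 < φinf)
    (B : ℝ → (E →L[ℝ] E →L[ℝ] ℝ)) (Binf : E →L[ℝ] E →L[ℝ] ℝ)
    (hu : Filter.Tendsto (fun ω => Real.sqrt ω • u ω) Filter.atTop (𝓝 w))
    (hs : Filter.Tendsto s Filter.atTop (𝓝 φinf))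
    (hB : Filter.Tendsto B Filter.atTop (𝓝 Binf))
    (htimelike : 0 < -(Binf w w))
    (KT : ℝ → ℝ)
    (hKT : ∀ ω, KT ω = Real.sqrt (-(B ω (u ω) (u ω))) / (8 * Real.pi * s ω))
    (v : ℝ → E)
    (hv : ∀ ω, v ω = (Real.sqrt ((2 * ω + 3) / (16 * Real.pi)) / s ω) • u ω)
    (μt : ℝ → ℝ)
    (hμt : ∀ ω, μt ω = Real.sqrt (-(1 / s ω) * B ω (v ω) (v ω))) :
    Filter.Tendsto KT Filter.atTop (𝓝 0) ∧
      Filter.Tendsto μt Filter.atTop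
        (𝓝 (Real.sqrt (-(Binf w w) / (8 * Real.pi * φinf ^ 3)))) ∧
      0 < Real.sqrt (-(Binf w w) / (8 * Real.pi * φinf ^ 3)) := by
  have hu₀ : Tendsto u atTop (𝓝 0) :=
    tendsto_zero_of_tendsto_smul_of_tendsto_atTop tendsto_sqrt_atTop hu
  have hBuu : Tendsto (fun ω => B ω (u ω) (u ω)) atTop (𝓝 0) := by
    simpa using (hB.clm_apply_s13 hu₀).clm_apply_s13 hu₀
  have hBww : Tendsto (fun ω => ω * B ω (u ω) (u ω)) atTop (𝓝 (Binf w w)) := by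
    refine ((hB.clm_apply_s13 hu).clm_apply_s13 hu).congr' ?_
    filter_upwards [eventually_ge_atTop 0] with ω hω
    rw [ContinuousLinearMap.apply_smul_smul, mul_self_sqrt hω]
  refine ⟨?_, ?_, sqrt_pos.mpr (by positivity)⟩
  · have h := hBuu.neg.sqrt.div (hs.const_mul (8 * π)) (by positivity)
    rw [neg_zero, sqrt_zero, zero_div] at h
    exact h.congr fun ω => (hKT ω).symm
  · simp only [funext hμt, hv, ContinuousLinearMap.apply_smul_smul]
    exact (tendsto_einstein_chemical_potential_sq hφinf.ne' hs hBww).sqrt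
end

section
/- (Quantitative version of Theorem 1.) Let E be a real normed vector space, w ∈ E, φ∞ > 0, α > 0, β > 0, B∞ : E →L[ℝ] E →L[ℝ] ℝ with -(B∞ w w) > 0, and let u : ℝ → E, s : ℝ → ℝ, B : ℝ → (E →L[ℝ] E →L[ℝ] ℝ) satisfy: (fun ω => u ω - (ω:ℝ)^(-(1/2):ℝ) • w) =O[atTop] (fun ω => (ω:ℝ)^(-(1/2+α):ℝ)), (fun ω => s ω - φ∞) =O[atTop] (fun ω => (ω:ℝ)^(-(1/2):ℝ)), and (fun ω => B ω - B∞) =O[atTop] (fun ω => (ω:ℝ)^(-β:ℝ)). Define v(ω) := (Real.sqrt((2ω+3)/(16π)) / s(ω)) • u(ω) and μ̃(ω) := Real.sqrt(-(1/s(ω)) * B(ω)(v(ω))(v(ω))). Then (fun ω => μ̃ ω - Real.sqrt(-(B∞ w w)/(8π * φ∞^3))) =O[atTop] (fun ω => (ω:ℝ)^(-(min α (min β (1/2))):ℝ)); in particular μ̃(ω) converges to a strictly positive number as ω → ∞. -/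
open Filter Topology Real Asymptotics

private lemma rpow_isBigO_rpow {a b : ℝ} (h : a ≤ b) :
    (fun ω : ℝ => ω ^ a) =O[atTop] (fun ω : ℝ => ω ^ b) := by
  refine IsBigO.of_bound 1 ?_
  filter_upwards [eventually_ge_atTop (1 : ℝ)] with ω hω
  have h0 : (0:ℝ) ≤ ω := by linarith
  rw [Real.norm_eq_abs, Real.norm_eq_abs, one_mul,
    abs_of_nonneg (Real.rpow_nonneg h0 _), abs_of_nonneg (Real.rpow_nonneg h0 _)]
  exact Real.rpow_le_rpow_of_exponent_le hω h

private lemma ev_rpow2 (a b : ℝ) :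
    (fun ω : ℝ => ω ^ a * ω ^ b) =ᶠ[atTop] fun ω : ℝ => ω ^ (a + b) := by
  filter_upwards [eventually_gt_atTop (0 : ℝ)] with ω hω
  rw [← Real.rpow_add hω]

private lemma ev_rpow3 (a b c : ℝ) :
    (fun ω : ℝ => ω ^ a * (ω ^ b * ω ^ c)) =ᶠ[atTop] fun ω : ℝ => ω ^ (a + b + c) := by
  filter_upwards [eventually_gt_atTop (0 : ℝ)] with ω hω
  rw [← Real.rpow_add hω, ← Real.rpow_add hω, add_assoc]

private lemma bilin_isBigO {E : Type*} [NormedAddCommGroup E] [NormedSpace ℝ E]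
    {F : ℝ → E →L[ℝ] E →L[ℝ] ℝ} {x y : ℝ → E} {p q r : ℝ → ℝ}
    (hF : F =O[atTop] p) (hx : x =O[atTop] q) (hy : y =O[atTop] r) :
    (fun ω => F ω (x ω) (y ω)) =O[atTop] fun ω => p ω * (q ω * r ω) := by
  obtain ⟨cF, hcF0, hcF⟩ := hF.exists_pos
  obtain ⟨cx, hcx0, hcx⟩ := hx.exists_pos
  obtain ⟨cy, hcy0, hcy⟩ := hy.exists_pos
  refine IsBigO.of_bound (cF * (cx * cy)) ?_
  filter_upwards [hcF.bound, hcx.bound, hcy.bound] with ω h1 h2 h3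
  have hb : ‖F ω (x ω) (y ω)‖ ≤ ‖F ω‖ * ‖x ω‖ * ‖y ω‖ := (F ω).le_opNorm₂ (x ω) (y ω)
  have hc : ‖F ω‖ * ‖x ω‖ * ‖y ω‖ ≤ (cF * ‖p ω‖) * (cx * ‖q ω‖) * (cy * ‖r ω‖) := by
    have := mul_le_mul (mul_le_mul h1 h2 (norm_nonneg _) (by positivity)) h3
      (norm_nonneg _) (by positivity)
    exact this
  have hn : ‖p ω * (q ω * r ω)‖ = ‖p ω‖ * (‖q ω‖ * ‖r ω‖) := by
    rw [norm_mul, norm_mul]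
  calc ‖F ω (x ω) (y ω)‖ ≤ (cF * ‖p ω‖) * (cx * ‖q ω‖) * (cy * ‖r ω‖) := le_trans hb hc
    _ = cF * (cx * cy) * (‖p ω‖ * (‖q ω‖ * ‖r ω‖)) := by ring
    _ = cF * (cx * cy) * ‖p ω * (q ω * r ω)‖ := by rw [hn]

private lemma bilin_const_isBigO {E : Type*} [NormedAddCommGroup E] [NormedSpace ℝ E]
    (Binf : E →L[ℝ] E →L[ℝ] ℝ) {x y : ℝ → E} {q r : ℝ → ℝ}
    (hx : x =O[atTop] q) (hy : y =O[atTop] r) :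
    (fun ω => Binf (x ω) (y ω)) =O[atTop] fun ω => q ω * r ω := by
  obtain ⟨cx, hcx0, hcx⟩ := hx.exists_pos
  obtain ⟨cy, hcy0, hcy⟩ := hy.exists_pos
  refine IsBigO.of_bound (‖Binf‖ * (cx * cy)) ?_
  filter_upwards [hcx.bound, hcy.bound] with ω h2 h3
  have hb : ‖Binf (x ω) (y ω)‖ ≤ ‖Binf‖ * ‖x ω‖ * ‖y ω‖ := Binf.le_opNorm₂ (x ω) (y ω)
  have hc : ‖Binf‖ * ‖x ω‖ * ‖y ω‖ ≤ ‖Binf‖ * (cx * ‖q ω‖) * (cy * ‖r ω‖) := by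
    have h4 : ‖Binf‖ * ‖x ω‖ ≤ ‖Binf‖ * (cx * ‖q ω‖) :=
      mul_le_mul_of_nonneg_left h2 (by positivity)
    exact mul_le_mul h4 h3 (norm_nonneg _) (by positivity)
  have hn : ‖q ω * r ω‖ = ‖q ω‖ * ‖r ω‖ := norm_mul _ _
  calc ‖Binf (x ω) (y ω)‖ ≤ ‖Binf‖ * (cx * ‖q ω‖) * (cy * ‖r ω‖) := le_trans hb hc
    _ = ‖Binf‖ * (cx * cy) * (‖q ω‖ * ‖r ω‖) := by ring
    _ = ‖Binf‖ * (cx * cy) * ‖q ω * r ω‖ := by rw [hn]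

private lemma abs_sqrt_sub_sqrt_le {a b : ℝ} (hb : 0 < b) :
    |Real.sqrt a - Real.sqrt b| ≤ |a - b| / Real.sqrt b := by
  have hsb : 0 < Real.sqrt b := Real.sqrt_pos.mpr hb
  rw [le_div_iff₀ hsb]
  rcases le_or_gt a 0 with ha | ha
  · rw [Real.sqrt_eq_zero'.mpr (by simpa using ha), zero_sub, abs_neg, abs_of_pos hsb]
    have h1 : Real.sqrt b * Real.sqrt b = b := Real.mul_self_sqrt hb.le
    have h2 : b - a ≤ |a - b| := by rw [abs_sub_comm]; exact le_abs_self _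
    nlinarith
  · have ha2 := Real.sq_sqrt ha.le
    have hb2 := Real.sq_sqrt hb.le
    have hpos : 0 < Real.sqrt a + Real.sqrt b := by positivity
    have key : (Real.sqrt a - Real.sqrt b) * (Real.sqrt a + Real.sqrt b) = a - b := by nlinarith
    calc |Real.sqrt a - Real.sqrt b| * Real.sqrt b
        ≤ |Real.sqrt a - Real.sqrt b| * (Real.sqrt a + Real.sqrt b) := by
          apply mul_le_mul_of_nonneg_left _ (abs_nonneg _)
          linarith [Real.sqrt_nonneg a]
      _ = |(Real.sqrt a - Real.sqrt b) * (Real.sqrt a + Real.sqrt b)| := by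
          rw [abs_mul, abs_of_pos hpos]
      _ = |a - b| := by rw [key]

set_option maxHeartbeats 1000000 in
/-- Quantitative version of Theorem 1: under the expansions
`∇ₐφ = ω^{-1/2} ∇ₐΦ + O(ω^{-(1/2+α)})`, `φ = φ∞ + O(ω^{-1/2})`, and
`g^{ab}(ω) = B∞ + O(ω^{-β})`, the Einstein-frame chemical potential
`μ̃(ω) = √(-(1/φ) g^{ab} ∇̃ₐφ̃ ∇̃_bφ̃)` (with `∇̃ₐφ̃ = √((2ω+3)/(16π)) ∇ₐφ/φ`)
converges to the strictly positive value `√(-(B∞ w w)/(8π φ∞³))` with rate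
`O(ω^{-min(α, β, 1/2)})`. -/
theorem chemical_potential_quantitative
    {E : Type*} [NormedAddCommGroup E] [NormedSpace ℝ E]
    (w : E) (φinf α β : ℝ) (hφinf : 0 < φinf) (hα : 0 < α) (hβ : 0 < β)
    (Binf : E →L[ℝ] E →L[ℝ] ℝ) (htimelike : 0 < -(Binf w w))
    (u : ℝ → E) (s : ℝ → ℝ) (B : ℝ → (E →L[ℝ] E →L[ℝ] ℝ))
    (hu : (fun ω => u ω - (ω : ℝ) ^ (-(1/2) : ℝ) • w) =O[Filter.atTop]
        (fun ω => (ω : ℝ) ^ (-(1/2 + α) : ℝ)))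
    (hs : (fun ω => s ω - φinf) =O[Filter.atTop] (fun ω => (ω : ℝ) ^ (-(1/2) : ℝ)))
    (hB : (fun ω => B ω - Binf) =O[Filter.atTop] (fun ω => (ω : ℝ) ^ (-β : ℝ)))
    (v : ℝ → E)
    (hv : ∀ ω, v ω = (Real.sqrt ((2 * ω + 3) / (16 * Real.pi)) / s ω) • u ω)
    (μt : ℝ → ℝ)
    (hμt : ∀ ω, μt ω = Real.sqrt (-(1 / s ω) * B ω (v ω) (v ω))) :
    (fun ω => μt ω - Real.sqrt (-(Binf w w) / (8 * Real.pi * φinf ^ 3)))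
        =O[Filter.atTop] (fun ω => (ω : ℝ) ^ (-(min α (min β (1/2))) : ℝ)) ∧
      (Filter.Tendsto μt Filter.atTop
          (𝓝 (Real.sqrt (-(Binf w w) / (8 * Real.pi * φinf ^ 3)))) ∧
        0 < Real.sqrt (-(Binf w w) / (8 * Real.pi * φinf ^ 3))) := by
  have hπ := Real.pi_pos
  set m := min α (min β (1/2 : ℝ)) with hmdef
  set L := -(Binf w w) / (8 * Real.pi * φinf ^ 3) with hLdef
  have hm0 : 0 < m := lt_min hα (lt_min hβ (by norm_num))
  have hmα : m ≤ α := min_le_left _ _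
  have hmβ : m ≤ β := le_trans (min_le_right _ _) (min_le_left _ _)
  have hmh : m ≤ 1/2 := le_trans (min_le_right _ _) (min_le_right _ _)
  have hL0 : 0 < L := by rw [hLdef]; exact div_pos htimelike (by positivity)
  have hsL : 0 < Real.sqrt L := Real.sqrt_pos.mpr hL0
  -- s facts
  have hstend : Tendsto s atTop (𝓝 φinf) := by
    have h0 : Tendsto (fun ω => s ω - φinf) atTop (𝓝 0) :=
      hs.trans_tendsto (tendsto_rpow_neg_atTop (by norm_num : (0:ℝ) < 1/2))
    have := h0.add_const φinf
    simpa using this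
  have hs_lb : ∀ᶠ ω in atTop, φinf / 2 < s ω :=
    hstend.eventually (eventually_gt_nhds (by linarith))
  have hs_ub : ∀ᶠ ω in atTop, s ω < 2 * φinf :=
    hstend.eventually (eventually_lt_nhds (by linarith))
  obtain ⟨C2, hC2pos, hC2⟩ := hs.exists_pos
  have hC2' : ∀ᶠ ω in atTop, |s ω - φinf| ≤ C2 * ω ^ (-(1/2) : ℝ) := by
    filter_upwards [hC2.bound, eventually_gt_atTop (0:ℝ)] with ω h1 h2
    rwa [Real.norm_eq_abs, Real.norm_eq_abs,
      abs_of_pos (Real.rpow_pos_of_pos h2 _)] at h1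
  -- u is O(ω^{-1/2})
  have hg : (fun ω : ℝ => (ω:ℝ) ^ (-(1/2) : ℝ) • w) =O[atTop]
      (fun ω : ℝ => ω ^ (-(1/2) : ℝ)) := by
    refine IsBigO.of_bound ‖w‖ ?_
    filter_upwards with ω
    rw [norm_smul, mul_comm]
  have hu' : u =O[atTop] (fun ω : ℝ => ω ^ (-(1/2) : ℝ)) := by
    have h1 := (hu.trans (rpow_isBigO_rpow (by linarith : -(1/2 + α) ≤ -(1/2:ℝ)))).add hg
    simpa using h1
  -- the three error terms
  have h1 : (fun ω => (B ω - Binf) (u ω) (u ω)) =O[atTop]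
      (fun ω : ℝ => ω ^ (-(1+m) : ℝ)) :=
    ((bilin_isBigO hB hu' hu').trans ((ev_rpow3 _ _ _).isBigO)).trans
      (rpow_isBigO_rpow (by linarith))
  have h2 : (fun ω => Binf (u ω - (ω:ℝ) ^ (-(1/2):ℝ) • w) (u ω)) =O[atTop]
      (fun ω : ℝ => ω ^ (-(1+m) : ℝ)) :=
    ((bilin_const_isBigO Binf hu hu').trans ((ev_rpow2 _ _).isBigO)).trans
      (rpow_isBigO_rpow (by linarith))
  have h3 : (fun ω => Binf ((ω:ℝ) ^ (-(1/2):ℝ) • w) (u ω - (ω:ℝ) ^ (-(1/2):ℝ) • w)) =O[atTop]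
      (fun ω : ℝ => ω ^ (-(1+m) : ℝ)) :=
    ((bilin_const_isBigO Binf hg hu).trans ((ev_rpow2 _ _).isBigO)).trans
      (rpow_isBigO_rpow (by linarith))
  -- main quadratic-form estimate
  have hP : (fun ω => B ω (u ω) (u ω) - ω ^ (-1:ℝ) * Binf w w) =O[atTop]
      (fun ω : ℝ => ω ^ (-(1+m) : ℝ)) := by
    have hPe : (fun ω : ℝ => B ω (u ω) (u ω) - ω ^ (-1:ℝ) * Binf w w) =ᶠ[atTop]
        (fun ω => (B ω - Binf) (u ω) (u ω)
          + (Binf (u ω - (ω:ℝ) ^ (-(1/2):ℝ) • w) (u ω)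
            + Binf ((ω:ℝ) ^ (-(1/2):ℝ) • w) (u ω - (ω:ℝ) ^ (-(1/2):ℝ) • w))) := by
      filter_upwards [eventually_gt_atTop (0:ℝ)] with ω hω
      have hsq : (ω:ℝ) ^ (-(1/2):ℝ) * ω ^ (-(1/2):ℝ) = ω ^ (-1:ℝ) := by
        rw [← Real.rpow_add hω]; norm_num
      simp only [ContinuousLinearMap.sub_apply, map_sub, map_smul,
        ContinuousLinearMap.smul_apply, smul_eq_mul]
      rw [← hsq]; ring
    exact hPe.trans_isBigO (h1.add (h2.add h3))
  -- the coefficient is O(ω)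
  have ha : (fun ω => (2*ω+3)/(16*Real.pi) / (s ω)^3) =O[atTop]
      (fun ω : ℝ => ω ^ (1:ℝ)) := by
    refine IsBigO.of_bound (5/(2*Real.pi*φinf^3)) ?_
    filter_upwards [eventually_ge_atTop (1:ℝ), hs_lb] with ω hω hlb
    have hω0 : (0:ℝ) < ω := by linarith
    have hs0 : 0 < s ω := by linarith
    have hs3 : φinf^3/8 ≤ (s ω)^3 := by
      have hh := pow_le_pow_left₀ (le_of_lt (half_pos hφinf)) hlb.le 3
      have he : (φinf/2)^3 = φinf^3/8 := by ring
      linarith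
    rw [Real.norm_eq_abs, Real.norm_eq_abs, Real.rpow_one, abs_of_pos hω0,
      abs_of_nonneg (div_nonneg (div_nonneg (by linarith) (by positivity)) (by positivity))]
    rw [div_le_iff₀ (by positivity : (0:ℝ) < (s ω)^3),
      div_le_iff₀ (by positivity : (0:ℝ) < 16*Real.pi)]
    have hstep : 5*ω ≤ 40/φinf^3 * ω * (s ω)^3 := by
      have e1 : 5*ω = 40/φinf^3 * ω * (φinf^3/8) := by field_simp; ring
      rw [e1]
      exact mul_le_mul_of_nonneg_left hs3 (by positivity)
    calc 2*ω+3 ≤ 5*ω := by linarith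
      _ ≤ 40/φinf^3 * ω * (s ω)^3 := hstep
      _ = 5/(2*Real.pi*φinf^3) * ω * (s ω)^3 * (16*Real.pi) := by field_simp; ring
  -- second error term
  have hT2 : (fun ω => 1/(8*Real.pi*φinf^3) - (2*ω+3)/(16*Real.pi)/(s ω)^3 * ω ^ (-1:ℝ))
      =O[atTop] (fun ω : ℝ => ω ^ (-(1/2) : ℝ)) := by
    refine IsBigO.of_bound ((14*φinf^2*C2 + 3*φinf^3)/(2*Real.pi*φinf^6)) ?_
    filter_upwards [eventually_ge_atTop (1:ℝ), hs_lb, hs_ub, hC2'] with ω hω hlb hub hsb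
    have hω0 : (0:ℝ) < ω := by linarith
    have hs0 : 0 < s ω := by linarith
    have ht0 : 0 < (ω:ℝ) ^ (-(1/2):ℝ) := Real.rpow_pos_of_pos hω0 _
    set t := (ω:ℝ) ^ (-(1/2):ℝ) with htdef
    have hωt : 1 ≤ ω * t := by
      have e : ω * t = ω ^ ((1/2):ℝ) := by
        rw [htdef]
        nth_rewrite 1 [← Real.rpow_one ω]
        rw [← Real.rpow_add hω0]; norm_num
      rw [e]
      calc (1:ℝ) = ω ^ (0:ℝ) := (Real.rpow_zero ω).symm
        _ ≤ ω ^ ((1/2):ℝ) := Real.rpow_le_rpow_of_exponent_le hω (by norm_num)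
    have hs3 : φinf^3/8 ≤ (s ω)^3 := by
      have hh := pow_le_pow_left₀ (le_of_lt (half_pos hφinf)) hlb.le 3
      have he : (φinf/2)^3 = φinf^3/8 := by ring
      linarith
    have hcube : |(s ω)^3 - φinf^3| ≤ 7*φinf^2*(C2*t) := by
      have e : (s ω)^3 - φinf^3 = (s ω - φinf)*((s ω)^2 + s ω*φinf + φinf^2) := by ring
      rw [e, abs_mul]
      have h7 : |(s ω)^2 + s ω*φinf + φinf^2| ≤ 7*φinf^2 := by
        rw [abs_of_nonneg (by nlinarith)]; nlinarith
      calc |s ω - φinf| * |(s ω)^2 + s ω*φinf + φinf^2| ≤ (C2*t) * (7*φinf^2) :=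
          mul_le_mul hsb h7 (abs_nonneg _) (by positivity)
        _ = 7*φinf^2*(C2*t) := by ring
    rw [Real.norm_eq_abs, Real.norm_eq_abs, abs_of_pos ht0, Real.rpow_neg_one]
    have hD : 1/(8*Real.pi*φinf^3) - (2*ω+3)/(16*Real.pi)/(s ω)^3 * ω⁻¹
        = (2*ω*((s ω)^3 - φinf^3) - 3*φinf^3) / (16*Real.pi*φinf^3*(s ω)^3*ω) := by
      field_simp
      ring
    rw [hD, abs_div, abs_of_pos (by positivity : (0:ℝ) < 16*Real.pi*φinf^3*(s ω)^3*ω)]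
    have hnum : |2*ω*((s ω)^3 - φinf^3) - 3*φinf^3| ≤ (14*φinf^2*C2 + 3*φinf^3)*(ω*t) := by
      have h1' : |2*ω*((s ω)^3 - φinf^3)| = 2*ω*|(s ω)^3 - φinf^3| := by
        rw [abs_mul, abs_of_nonneg (by linarith : (0:ℝ) ≤ 2*ω)]
      have htri : |2*ω*((s ω)^3 - φinf^3) - 3*φinf^3|
          ≤ |2*ω*((s ω)^3 - φinf^3)| + |3*φinf^3| := abs_sub _ _
      rw [h1', abs_of_pos (by positivity : (0:ℝ) < 3*φinf^3)] at htri
      have hm1 : 2*ω*|(s ω)^3 - φinf^3| ≤ 2*ω*(7*φinf^2*(C2*t)) :=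
        mul_le_mul_of_nonneg_left hcube (by linarith)
      have hm2 : 3*φinf^3 ≤ 3*φinf^3*(ω*t) := by
        nth_rewrite 1 [← mul_one (3*φinf^3)]
        exact mul_le_mul_of_nonneg_left hωt (by positivity)
      nlinarith
    calc |2*ω*((s ω)^3 - φinf^3) - 3*φinf^3| / (16*Real.pi*φinf^3*(s ω)^3*ω)
        ≤ ((14*φinf^2*C2 + 3*φinf^3)*(ω*t)) / (16*Real.pi*φinf^3*(s ω)^3*ω) := by
          gcongr
      _ ≤ ((14*φinf^2*C2 + 3*φinf^3)*(ω*t)) / (2*Real.pi*φinf^6*ω) := by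
          have hden : 2*Real.pi*φinf^6*ω ≤ 16*Real.pi*φinf^3*(s ω)^3*ω := by
            have h8 : 2*φinf^6 ≤ 16*φinf^3*(s ω)^3 := by
              nlinarith [mul_nonneg (by positivity : (0:ℝ) ≤ 16*φinf^3)
                (by linarith : (0:ℝ) ≤ (s ω)^3 - φinf^3/8)]
            nlinarith [mul_le_mul_of_nonneg_left h8 (le_of_lt (mul_pos hπ hω0))]
          exact div_le_div_of_nonneg_left (by positivity) (by positivity) hden
      _ = (14*φinf^2*C2 + 3*φinf^3)/(2*Real.pi*φinf^6) * t := by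
          field_simp
  -- eventual algebraic identity
  have hfL : (fun ω => -(1 / s ω) * B ω (v ω) (v ω) - L) =ᶠ[atTop]
      (fun ω => (-((2*ω+3)/(16*Real.pi)/(s ω)^3)) * (B ω (u ω) (u ω) - ω ^ (-1:ℝ) * Binf w w)
        + (1/(8*Real.pi*φinf^3) - (2*ω+3)/(16*Real.pi)/(s ω)^3 * ω ^ (-1:ℝ)) * Binf w w) := by
    filter_upwards [eventually_ge_atTop (1:ℝ), hs_lb] with ω hω hlb
    have hω0 : (0:ℝ) < ω := by linarith
    have hs0 : 0 < s ω := by linarith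
    have hq0 : (0:ℝ) ≤ (2*ω+3)/(16*Real.pi) :=
      div_nonneg (by linarith) (by positivity)
    have hvv : B ω (v ω) (v ω)
        = (2*ω+3)/(16*Real.pi)/(s ω)^2 * (B ω (u ω) (u ω)) := by
      rw [hv ω]
      simp only [map_smul, ContinuousLinearMap.smul_apply, smul_eq_mul]
      have hmss : Real.sqrt ((2*ω+3)/(16*Real.pi)) * Real.sqrt ((2*ω+3)/(16*Real.pi))
          = (2*ω+3)/(16*Real.pi) := Real.mul_self_sqrt hq0
      calc Real.sqrt ((2*ω+3)/(16*Real.pi)) / s ω *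
            (Real.sqrt ((2*ω+3)/(16*Real.pi)) / s ω * B ω (u ω) (u ω))
          = Real.sqrt ((2*ω+3)/(16*Real.pi)) * Real.sqrt ((2*ω+3)/(16*Real.pi))
              / (s ω * s ω) * B ω (u ω) (u ω) := by ring
        _ = (2*ω+3)/(16*Real.pi)/(s ω)^2 * B ω (u ω) (u ω) := by rw [hmss]; ring
    rw [hvv, hLdef]
    field_simp
    ring
  -- assemble the big-O for the radicand
  have hT1 : (fun ω => (-((2*ω+3)/(16*Real.pi)/(s ω)^3))
        * (B ω (u ω) (u ω) - ω ^ (-1:ℝ) * Binf w w))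
      =O[atTop] (fun ω : ℝ => ω ^ (-m : ℝ)) := by
    have h := (ha.neg_left.mul hP).trans ((ev_rpow2 (1:ℝ) (-(1+m))).isBigO)
    exact h.trans (rpow_isBigO_rpow (by linarith))
  have hT2' : (fun ω => (1/(8*Real.pi*φinf^3) - (2*ω+3)/(16*Real.pi)/(s ω)^3 * ω ^ (-1:ℝ))
        * Binf w w)
      =O[atTop] (fun ω : ℝ => ω ^ (-m : ℝ)) := by
    have h := hT2.trans (rpow_isBigO_rpow (by linarith : -(1/2:ℝ) ≤ -m))
    simpa [mul_comm] using h.const_mul_left (Binf w w)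
  have hf : (fun ω => -(1 / s ω) * B ω (v ω) (v ω) - L) =O[atTop]
      (fun ω : ℝ => ω ^ (-m : ℝ)) := hfL.trans_isBigO (hT1.add hT2')
  -- from radicand to square root
  have hμO : (fun ω => μt ω - Real.sqrt L) =O[atTop]
      (fun ω => -(1 / s ω) * B ω (v ω) (v ω) - L) := by
    refine IsBigO.of_bound (Real.sqrt L)⁻¹ ?_
    filter_upwards with ω
    rw [hμt ω, Real.norm_eq_abs, Real.norm_eq_abs]
    have h := abs_sqrt_sub_sqrt_le (a := -(1 / s ω) * B ω (v ω) (v ω)) hL0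
    exact h.trans_eq (div_eq_inv_mul _ _)
  have hgoal1 : (fun ω => μt ω - Real.sqrt L) =O[atTop]
      (fun ω : ℝ => ω ^ (-m : ℝ)) := hμO.trans hf
  refine ⟨hgoal1, ?_, hsL⟩
  have h0 : Tendsto (fun ω => μt ω - Real.sqrt L) atTop (𝓝 0) :=
    hgoal1.trans_tendsto (tendsto_rpow_neg_atTop hm0)
  have hfin := h0.add_const (Real.sqrt L)
  simpa using hfin
end
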